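/- arXiv:2402.12961 — 2 statements merged into one kernel-verified Lean document; each statement's English description precedes it below -/
import Mathlib

section
/- Let T ∈ B_{A^{1/2}}(H). Then ρ_A(T) is an open subset of ℂ, and there exists a function R from ℂ to the bounded operators on H which is analytic on ρ_A(T) (with respect to the operator norm) and such that for every λ ∈ ρ_A(T), R(λ) ∈ B_{A^{1/2}}(H) and A(λI − T)R(λ) = A·R(λ)(λI − T) = A (so R(λ) is an A-inverse of λI − T). -/
variable {H : Type*} [NormedAddCommGroup H] [InnerProductSpace ℂ H] [CompleteSpace H]

/-- The semi-norm `‖x‖_A = ⟨Ax, x⟩^{1/2}` induced by a positive operator `A`. -/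
noncomputable def anorm (A : H →L[ℂ] H) (x : H) : ℝ :=
  Real.sqrt (RCLike.re (inner ℂ (A x) x : ℂ))

/-- Membership in `B_{A^{1/2}}(H)`: there is `c > 0` with `‖Tx‖_A ≤ c ‖x‖_A` for all `x`. -/
def MemBA (A T : H →L[ℂ] H) : Prop :=
  ∃ c > 0, ∀ x : H, anorm A (T x) ≤ c * anorm A x

/-- The `A`-operator seminorm `‖T‖_A`: the least `c ≥ 0` with `‖Tx‖_A ≤ c ‖x‖_A` for all `x`. -/
noncomputable def opANorm (A T : H →L[ℂ] H) : ℝ :=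
  sInf {c : ℝ | 0 ≤ c ∧ ∀ x : H, anorm A (T x) ≤ c * anorm A x}

/-- `T` is `A`-invertible in `B_{A^{1/2}}(H)`. -/
def AInv (A T : H →L[ℂ] H) : Prop :=
  T ≠ 0 ∧ ∃ S : H →L[ℂ] H, S ≠ 0 ∧ MemBA A S ∧
    A.comp (T.comp S) = A ∧ A.comp (S.comp T) = A

/-- The `A`-resolvent set `ρ_A(T)`. -/
def rhoA (A T : H →L[ℂ] H) : Set ℂ :=
  {lam : ℂ | AInv A (lam • (1 : H →L[ℂ] H) - T)}

/-- The `A`-spectrum `σ_A(T)`. -/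
def sigmaA (A T : H →L[ℂ] H) : Set ℂ := (rhoA A T)ᶜ

/-- The `A`-spectral radius `r_A(T) = inf_{n ≥ 1} ‖T^n‖_A^{1/n}`. -/
noncomputable def rA (A T : H →L[ℂ] H) : ℝ :=
  ⨅ n : ℕ+, (opANorm A (T ^ (n : ℕ))) ^ ((((n : ℕ) : ℝ))⁻¹)

/-- `sup {|λ| : λ ∈ σ_A(T)}`. -/
noncomputable def supSpecA (A T : H →L[ℂ] H) : ℝ :=
  sSup ((fun z : ℂ => ‖z‖) '' sigmaA A T)

/-- `S` is the `A^{1/2}`-adjoint `T^⋄` of `T`. -/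
def IsDiamond (sqrtA T S : H →L[ℂ] H) : Prop :=
  sqrtA.comp S = (ContinuousLinearMap.adjoint T).comp sqrtA ∧
    Set.range (⇑S) ⊆ closure (Set.range (⇑sqrtA))

/-- The orthogonal projection of `H` onto the closure of the range of `A`. -/
noncomputable def projA (A : H →L[ℂ] H) : H →L[ℂ] H :=
  haveI : CompleteSpace ((LinearMap.range (A : H →ₗ[ℂ] H)).topologicalClosure : Submodule ℂ H) :=
    (Submodule.isClosed_topologicalClosure _).completeSpace_coe
  ((LinearMap.range (A : H →ₗ[ℂ] H)).topologicalClosure.subtypeL).comp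
    (Submodule.orthogonalProjectionOnto (LinearMap.range (A : H →ₗ[ℂ] H)).topologicalClosure)

/-!
Every operator in `B_{A^{1/2}}(H)` leaves `ker A` invariant, since `‖x‖_A = 0` iff `A x = 0`.
If `S₀` is an `A`-inverse of `λ₀ - T` and `μ = λ₀ - λ` is small, then `(1 - μ S₀)⁻¹ S₀` is an
`A`-inverse of `λ - T`: the identities are algebraic up to a term `A (1 - μ S₀)⁻¹ N` with
`A N = 0`, which vanishes because `y = (1 - μ S₀)⁻¹ x` satisfies `y = x + μ S₀ y`, whence
`(1 - |μ| c) ‖y‖_A ≤ ‖x‖_A`; the same estimate puts it in `B_{A^{1/2}}(H)`. So `ρ_A(T)` is open.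
Two `A`-inverses `S, S'` of the same operator satisfy `A S = A S'`, so they agree after
composing with the orthogonal projection `P` onto `closure (range A) = (ker A)ᗮ`. Hence
`λ ↦ P S(λ)` coincides near `λ₀` with `λ ↦ P (1 - (λ₀ - λ) S₀)⁻¹ S₀`, which is analytic.
-/

open Filter Topology

section ASeminorm

variable {A : H →L[ℂ] H}

lemma anorm_eq_norm_sqrt (hA : A.IsPositive) (x : H) : anorm A x = ‖CFC.sqrt A x‖ := by
  have hsa : IsSelfAdjoint (CFC.sqrt A) := (CFC.sqrt_nonneg A).isSelfAdjoint
  have hA' : A x = CFC.sqrt A (CFC.sqrt A x) := by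
    rw [← mul_apply_eq_comp, CFC.sqrt_mul_sqrt_self A ((A.nonneg_iff_isPositive).2 hA)]
  rw [anorm, hA', ← ContinuousLinearMap.adjoint_inner_right, hsa.adjoint_eq, inner_self_eq_norm_sq,
    Real.sqrt_sq (norm_nonneg _)]

lemma anorm_add_le (hA : A.IsPositive) (x y : H) : anorm A (x + y) ≤ anorm A x + anorm A y := by
  simp only [anorm_eq_norm_sqrt hA, map_add, norm_add_le]

lemma anorm_sub_le (hA : A.IsPositive) (x y : H) : anorm A (x - y) ≤ anorm A x + anorm A y := by
  simp only [anorm_eq_norm_sqrt hA, map_sub, norm_sub_le]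

lemma anorm_smul (hA : A.IsPositive) (c : ℂ) (x : H) : anorm A (c • x) = ‖c‖ * anorm A x := by
  simp only [anorm_eq_norm_sqrt hA, map_smul, norm_smul]

lemma anorm_eq_zero_iff (hA : A.IsPositive) {x : H} : anorm A x = 0 ↔ A x = 0 := by
  refine ⟨fun h => ?_, fun h => by simp [anorm, h]⟩
  rw [anorm_eq_norm_sqrt hA, norm_eq_zero] at h
  rw [← CFC.sqrt_mul_sqrt_self A ((A.nonneg_iff_isPositive).2 hA), mul_apply_eq_comp, h,
    map_zero]

lemma anorm_congr (hA : A.IsPositive) {x y : H} (h : A x = A y) : anorm A x = anorm A y := by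
  have hxy : anorm A (x - y) = 0 := (anorm_eq_zero_iff hA).2 (by rw [map_sub, h, sub_self])
  rw [anorm_eq_norm_sqrt hA, map_sub, norm_eq_zero, sub_eq_zero] at hxy
  rw [anorm_eq_norm_sqrt hA, anorm_eq_norm_sqrt hA, hxy]

lemma mul_mul_eq_zero_of_anorm_le (hA : A.IsPositive) {S X : H →L[ℂ] H} {c : ℝ}
    (hS : ∀ x, anorm A (S x) ≤ c * anorm A x) (hX : A * X = 0) : A * (S * X) = 0 := by
  ext x
  have hx : anorm A (X x) = 0 := (anorm_eq_zero_iff hA).2 (by simpa using congrArg (· x) hX)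
  have hle := hS (X x)
  rw [hx, mul_zero] at hle
  exact (anorm_eq_zero_iff hA).1 (le_antisymm hle (Real.sqrt_nonneg _))

lemma MemBA.mul_mul_eq_zero (hA : A.IsPositive) {S X : H →L[ℂ] H} (hS : MemBA A S)
    (hX : A * X = 0) : A * (S * X) = 0 :=
  let ⟨_, _, hc⟩ := hS
  mul_mul_eq_zero_of_anorm_le hA hc hX

lemma MemBA.smul_one_sub (hA : A.IsPositive) {T : H →L[ℂ] H} (hT : MemBA A T) (lam : ℂ) :
    MemBA A (lam • 1 - T) := by
  obtain ⟨c, hc, hTc⟩ := hT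
  refine ⟨‖lam‖ + c, by positivity, fun x => ?_⟩
  calc anorm A ((lam • 1 - T) x) = anorm A (lam • x - T x) := rfl
    _ ≤ ‖lam‖ * anorm A x + c * anorm A x := by
        grw [anorm_sub_le hA, anorm_smul hA, hTc]
    _ = (‖lam‖ + c) * anorm A x := by ring

end ASeminorm

section Projection

variable {A : H →L[ℂ] H}

lemma apply_eq_zero_iff_mem_orthogonal (hA : IsSelfAdjoint A) {y : H} :
    A y = 0 ↔ y ∈ (LinearMap.range (A : H →ₗ[ℂ] H)).topologicalClosureᗮ := by
  rw [Submodule.orthogonal_closure, ContinuousLinearMap.orthogonal_range, hA.adjoint_eq]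
  rfl

lemma mul_projA (hA : IsSelfAdjoint A) : A * projA A = A := by
  ext y
  have h := (apply_eq_zero_iff_mem_orthogonal hA).2 (Submodule.sub_starProjection_mem_orthogonal y)
  rwa [map_sub, sub_eq_zero, eq_comm] at h

lemma projA_mul_eq_zero (hA : IsSelfAdjoint A) {X : H →L[ℂ] H} (hX : A * X = 0) :
    projA A * X = 0 := by
  ext x
  exact (Submodule.starProjection_apply_eq_zero_iff _).2
    ((apply_eq_zero_iff_mem_orthogonal hA).1 (congrArg (· x) hX))

end Projection

section AInverse

variable {A B S : H →L[ℂ] H}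

def IsAInverse (A B S : H →L[ℂ] H) : Prop :=
  MemBA A S ∧ A * (B * S) = A ∧ A * (S * B) = A

omit [CompleteSpace H] in
lemma aInv_iff_exists_isAInverse (hA0 : A ≠ 0) : AInv A B ↔ ∃ S, IsAInverse A B S := by
  refine ⟨fun ⟨_, S, _, hS⟩ => ⟨S, hS⟩, fun ⟨S, hS, hBS, hSB⟩ => ⟨?_, S, ?_, hS, hBS, hSB⟩⟩
  · rintro rfl
    exact hA0 (by simpa using hBS.symm)
  · rintro rfl
    exact hA0 (by simpa using hBS.symm)

lemma IsAInverse.projA_mul (hA : A.IsPositive) (h : IsAInverse A B S) (hB : MemBA A B) :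
    IsAInverse A B (projA A * S) := by
  obtain ⟨⟨c, hc, hSc⟩, hBS, hSB⟩ := h
  have hAP := mul_projA hA.isSelfAdjoint
  have hAPx (x : H) : A (projA A x) = A x := congrArg (· x) hAP
  refine ⟨⟨c, hc, fun x => ?_⟩, ?_, ?_⟩
  · rw [mul_apply_eq_comp, anorm_congr hA (hAPx _)]
    exact hSc x
  · have hker : A * (B * (projA A * S - S)) = 0 :=
      hB.mul_mul_eq_zero hA (by rw [mul_sub, ← mul_assoc, hAP, sub_self])
    rwa [mul_sub, mul_sub, hBS, sub_eq_zero] at hker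
  · rw [mul_assoc, ← mul_assoc A, hAP, hSB]

lemma projA_mul_eq_of_isAInverse (hA : A.IsPositive) {S' : H →L[ℂ] H} (hS : MemBA A S)
    (hSB : A * (S * B) = A) (hBS' : A * (B * S') = A) : projA A * S = projA A * S' := by
  have hker : A * (S * (B * S' - 1)) = 0 :=
    hS.mul_mul_eq_zero hA (by rw [mul_sub, hBS', mul_one, sub_self])
  have hAS : A * S = A * S' := by
    rw [mul_sub, mul_sub, mul_one, sub_eq_zero, ← mul_assoc, ← mul_assoc, mul_assoc A S B,
      hSB] at hker
    exact hker.symm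
  rw [← sub_eq_zero, ← mul_sub]
  exact projA_mul_eq_zero hA.isSelfAdjoint (by rw [mul_sub, hAS, sub_self])

end AInverse

section Perturbation

variable {A B S : H →L[ℂ] H}

lemma anorm_inverse_one_sub_smul_le (hA : A.IsPositive) {c : ℝ}
    (hS : ∀ x, anorm A (S x) ≤ c * anorm A x) {μ : ℂ} (hμS : ‖μ • S‖ < 1) (hμc : ‖μ‖ * c < 1)
    (x : H) : anorm A (Ring.inverse (1 - μ • S) x) ≤ (1 - ‖μ‖ * c)⁻¹ * anorm A x := by
  have hinv : (1 - μ • S) (Ring.inverse (1 - μ • S) x) = x := by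
    rw [← mul_apply_eq_comp, Ring.mul_inverse_cancel _ (isUnit_one_sub_of_norm_lt_one hμS)]
    rfl
  set y := Ring.inverse (1 - μ • S) x
  have hy : y = x + μ • S y := by
    rw [← hinv]
    simp
  have hle : anorm A y ≤ anorm A x + ‖μ‖ * (c * anorm A y) := by
    calc anorm A y = anorm A (x + μ • S y) := by rw [← hy]
      _ ≤ anorm A x + ‖μ‖ * anorm A (S y) := by rw [← anorm_smul hA]; exact anorm_add_le hA _ _
      _ ≤ anorm A x + ‖μ‖ * (c * anorm A y) := by grw [hS y]
  rw [le_inv_mul_iff₀ (by linarith)]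
  linarith

lemma IsAInverse.eventually_sub_smul_one (hA : A.IsPositive) (h : IsAInverse A B S) :
    ∀ᶠ μ in 𝓝 (0 : ℂ), IsAInverse A (B - μ • 1) (Ring.inverse (1 - μ • S) * S) := by
  obtain ⟨⟨c, hc, hSc⟩, hBS, hSB⟩ := h
  have hsmall : ∀ᶠ μ in 𝓝 (0 : ℂ), ‖μ • S‖ < 1 ∧ ‖μ‖ * c < 1 :=
    (ContinuousAt.eventually_lt (by fun_prop) continuousAt_const (by simp)).and
      (ContinuousAt.eventually_lt (by fun_prop) continuousAt_const (by simp))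
  filter_upwards [hsmall] with μ ⟨hμS, hμc⟩
  have hVbound := anorm_inverse_one_sub_smul_le hA hSc hμS hμc
  have hK : 0 < (1 - ‖μ‖ * c)⁻¹ := inv_pos.2 (sub_pos.2 hμc)
  obtain ⟨U, hU⟩ := isUnit_one_sub_of_norm_lt_one hμS
  rw [← hU, Ring.inverse_unit] at hVbound ⊢
  have hcomm : Commute S ↑U⁻¹ := by
    refine Commute.units_inv_right ?_
    rw [hU]
    exact (Commute.one_right S).sub_right ((Commute.refl S).smul_right μ)
  refine ⟨⟨(1 - ‖μ‖ * c)⁻¹ * c, by positivity, fun x => ?_⟩, ?_, ?_⟩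
  · calc anorm A ((↑U⁻¹ * S) x) ≤ (1 - ‖μ‖ * c)⁻¹ * anorm A (S x) := hVbound (S x)
      _ ≤ (1 - ‖μ‖ * c)⁻¹ * (c * anorm A x) := mul_le_mul_of_nonneg_left (hSc x) hK.le
      _ = (1 - ‖μ‖ * c)⁻¹ * c * anorm A x := by ring
  · rw [← hcomm.eq]
    calc A * ((B - μ • 1) * (S * ↑U⁻¹)) = (A * (B * S) - A * (μ • S)) * ↑U⁻¹ := by
          simp only [sub_mul, mul_sub, smul_mul_assoc, mul_smul_comm, one_mul, mul_assoc]
      _ = A * ↑U * ↑U⁻¹ := by rw [hBS, hU, mul_sub, mul_one]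
      _ = A := by rw [mul_assoc, Units.mul_inv, mul_one]
  · have hN : A * (S * B - 1) = 0 := by rw [mul_sub, hSB, mul_one, sub_self]
    have hsplit : ↑U⁻¹ * S * (B - μ • 1) = ↑U⁻¹ * (↑U + (S * B - 1)) := by
      rw [mul_assoc, mul_sub, mul_smul_comm, mul_one, hU]
      congr 1
      abel
    rw [hsplit, mul_add, mul_add, mul_mul_eq_zero_of_anorm_le hA hVbound hN, Units.inv_mul,
      mul_one, add_zero]

end Perturbation

section Resolvent

variable {A T : H →L[ℂ] H}

/-- A chosen `A`-inverse of `λ - T`, made canonical by projecting onto `closure (range A)`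
(see `projA_mul_eq_of_isAInverse`); its value off `rhoA A T` is irrelevant. -/
noncomputable def resolventA (A T : H →L[ℂ] H) (lam : ℂ) : H →L[ℂ] H :=
  projA A * Classical.epsilon (IsAInverse A (lam • 1 - T))

lemma isAInverse_resolventA (hA : A.IsPositive) (hA0 : A ≠ 0) (hT : MemBA A T) {lam : ℂ}
    (hlam : lam ∈ rhoA A T) : IsAInverse A (lam • 1 - T) (resolventA A T lam) :=
  (Classical.epsilon_spec ((aInv_iff_exists_isAInverse hA0).1 hlam)).projA_mul hA
    (hT.smul_one_sub hA lam)

lemma eventually_mem_rhoA_and_resolventA_eq (hA : A.IsPositive) (hA0 : A ≠ 0)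
    (hT : MemBA A T) {lam₀ : ℂ} (hlam₀ : lam₀ ∈ rhoA A T) :
    ∀ᶠ lam in 𝓝 lam₀, lam ∈ rhoA A T ∧ resolventA A T lam =
      projA A * (Ring.inverse (1 - (lam₀ - lam) • resolventA A T lam₀) * resolventA A T lam₀) := by
  have hμ : Tendsto (fun lam => lam₀ - lam) (𝓝 lam₀) (𝓝 0) :=
    (continuous_sub_left lam₀).tendsto' lam₀ 0 (sub_self lam₀)
  filter_upwards [hμ.eventually
    ((isAInverse_resolventA hA hA0 hT hlam₀).eventually_sub_smul_one hA)] with lam hlam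
  have hB : lam₀ • 1 - T - (lam₀ - lam) • 1 = lam • (1 : H →L[ℂ] H) - T := by
    rw [sub_smul]; abel
  rw [hB] at hlam
  have hmem : lam ∈ rhoA A T := (aInv_iff_exists_isAInverse hA0).2 ⟨_, hlam⟩
  refine ⟨hmem, (projA_mul_eq_of_isAInverse hA hlam.1 hlam.2.2 ?_).symm⟩
  exact (Classical.epsilon_spec ((aInv_iff_exists_isAInverse hA0).1 hmem)).2.1

lemma isOpen_rhoA (hA : A.IsPositive) (hA0 : A ≠ 0) (hT : MemBA A T) : IsOpen (rhoA A T) :=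
  isOpen_iff_mem_nhds.2 fun _ hlam₀ =>
    (eventually_mem_rhoA_and_resolventA_eq hA hA0 hT hlam₀).mono fun _ h => h.1

lemma analyticOnNhd_resolventA (hA : A.IsPositive) (hA0 : A ≠ 0) (hT : MemBA A T) :
    AnalyticOnNhd ℂ (resolventA A T) (rhoA A T) := by
  intro lam₀ hlam₀
  set S₀ := resolventA A T lam₀
  have hinv : AnalyticAt ℂ (fun lam : ℂ => Ring.inverse (1 - (lam₀ - lam) • S₀)) lam₀ :=
    (analyticAt_inverse_one_sub ℂ (H →L[ℂ] H)).comp_of_eq (by fun_prop) (by simp)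
  exact (analyticAt_const.mul (hinv.mul analyticAt_const)).congr
    ((eventually_mem_rhoA_and_resolventA_eq hA hA0 hT hlam₀).mono fun _ h => h.2.symm)

end Resolvent

theorem stmt13 (A T : H →L[ℂ] H) (hA : A.IsPositive) (hA0 : A ≠ 0)
    (hT : MemBA A T) :
    IsOpen (rhoA A T) ∧
      ∃ R : ℂ → H →L[ℂ] H, AnalyticOnNhd ℂ R (rhoA A T) ∧
        ∀ lam ∈ rhoA A T, MemBA A (R lam) ∧
          A.comp ((lam • (1 : H →L[ℂ] H) - T).comp (R lam)) = A ∧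
          A.comp ((R lam).comp (lam • (1 : H →L[ℂ] H) - T)) = A :=
  ⟨isOpen_rhoA hA hA0 hT, resolventA A T, analyticOnNhd_resolventA hA hA0 hT,
    fun _ hlam => isAInverse_resolventA hA hA0 hT hlam⟩
end

section
/- Let T ∈ B_{A^{1/2}}(H) be nonzero and A-invertible in B_{A^{1/2}}(H) with A-inverse S ∈ B_{A^{1/2}}(H) (so S is nonzero and ATS = AST = A). Then r_A(T)·r_A(S) ≥ 1. -/
variable {H : Type*} [NormedAddCommGroup H] [InnerProductSpace ℂ H] [CompleteSpace H]

/-!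
From `A T S = A` and the invariance of `ker A` under operators bounded for `‖·‖_A` one gets
`A Tⁿ Sⁿ = A`, so by Cauchy–Schwarz for `⟨·,·⟩_A`,
`‖x‖_A² = ⟨A Tⁿ Sⁿ x, x⟩ ≤ ‖Tⁿ‖_A ‖Sⁿ‖_A ‖x‖_A²`; a vector with `‖x‖_A ≠ 0` exists since `A ≠ 0`,
whence `1 ≤ ‖Tⁿ‖_A ‖Sⁿ‖_A`. Using this with `n m` in place of `n` together with submultiplicativity gives
`1 ≤ ‖Tⁿ‖_A^{1/n} ‖Sᵐ‖_A^{1/m}` for all `n, m ≥ 1`, and taking infima gives the theorem.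
-/

section ASeminorm

variable {E : Type*} [NormedAddCommGroup E] [InnerProductSpace ℂ E] {A T S : E →L[ℂ] E}

/-- The norm of this core is definitionally `anorm A`, so its Cauchy–Schwarz inequality applies. -/
noncomputable abbrev ContinuousLinearMap.IsPositive.preInnerProductSpaceCore (hA : A.IsPositive) :
    PreInnerProductSpace.Core ℂ E where
  inner x y := inner ℂ (A x) y
  conj_inner_symm x y := by
    rw [inner_conj_symm]
    exact (hA.isSymmetric x y).symm
  re_inner_nonneg x := hA.re_inner_nonneg_left x
  add_left x y z := by simp only [map_add, inner_add_left]
  smul_left x y r := by simp only [map_smul, inner_smul_left]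

theorem anorm_nonneg (x : E) : 0 ≤ anorm A x := Real.sqrt_nonneg _

theorem anorm_sq (hA : A.IsPositive) (x : E) :
    anorm A x ^ 2 = RCLike.re (inner ℂ (A x) x) :=
  Real.sq_sqrt (hA.re_inner_nonneg_left x)

theorem norm_inner_apply_le_anorm_mul_anorm (hA : A.IsPositive) (x y : E) :
    ‖inner ℂ (A x) y‖ ≤ anorm A x * anorm A y :=
  @InnerProductSpace.Core.norm_inner_le_norm ℂ E _ _ _ hA.preInnerProductSpaceCore x y

theorem apply_eq_zero_of_anorm_eq_zero (hA : A.IsPositive) {w : E} (hw : anorm A w = 0) :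
    A w = 0 := by
  have h := norm_inner_apply_le_anorm_mul_anorm hA w (A w)
  rw [hw, zero_mul, inner_self_eq_norm_sq_to_K, norm_pow, RCLike.norm_ofReal, abs_norm] at h
  exact norm_eq_zero.1 (pow_eq_zero_iff two_ne_zero |>.1 (le_antisymm h (by positivity)))

theorem anorm_eq_zero_of_apply_eq_zero {w : E} (hw : A w = 0) : anorm A w = 0 := by
  simp [anorm, hw]

theorem exists_anorm_pos (hA : A.IsPositive) (hA0 : A ≠ 0) : ∃ x, 0 < anorm A x := by
  obtain ⟨x, hx⟩ := DFunLike.ne_iff.1 hA0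
  exact ⟨x, (anorm_nonneg x).lt_of_ne' fun h => hx (apply_eq_zero_of_anorm_eq_zero hA h)⟩

theorem opANorm_nonneg : 0 ≤ opANorm A T :=
  Real.sInf_nonneg fun _ hc => hc.1

theorem opANorm_le {c : ℝ} (hc : 0 ≤ c) (h : ∀ x, anorm A (T x) ≤ c * anorm A x) :
    opANorm A T ≤ c :=
  csInf_le ⟨0, fun _ hc => hc.1⟩ ⟨hc, h⟩

theorem MemBA.anorm_apply_le (hT : MemBA A T) (x : E) :
    anorm A (T x) ≤ opANorm A T * anorm A x := by
  obtain ⟨c, hc, hcT⟩ := hT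
  rcases (anorm_nonneg (A := A) x).eq_or_lt with hx | hx
  · simpa [← hx] using hcT x
  · rw [← div_le_iff₀ hx]
    exact le_csInf ⟨c, hc.le, hcT⟩ fun d hd => (div_le_iff₀ hx).2 (hd.2 x)

theorem MemBA.mul (hT : MemBA A T) (hS : MemBA A S) : MemBA A (T * S) := by
  obtain ⟨c, hc, hcT⟩ := hT
  obtain ⟨d, hd, hdS⟩ := hS
  refine ⟨c * d, mul_pos hc hd, fun x => ?_⟩
  calc anorm A (T (S x)) ≤ c * anorm A (S x) := hcT _
    _ ≤ c * (d * anorm A x) := by gcongr; exact hdS x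
    _ = c * d * anorm A x := by ring

theorem MemBA.pow (hT : MemBA A T) (n : ℕ) : MemBA A (T ^ n) := by
  induction n with
  | zero => exact ⟨1, one_pos, fun x => by simp⟩
  | succ n ih => rw [pow_succ]; exact ih.mul hT

theorem opANorm_mul_le (hT : MemBA A T) (hS : MemBA A S) :
    opANorm A (T * S) ≤ opANorm A T * opANorm A S := by
  refine opANorm_le (mul_nonneg opANorm_nonneg opANorm_nonneg) fun x => ?_
  calc anorm A (T (S x)) ≤ opANorm A T * anorm A (S x) := hT.anorm_apply_le _
    _ ≤ opANorm A T * (opANorm A S * anorm A x) := by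
        gcongr
        · exact opANorm_nonneg
        · exact hS.anorm_apply_le x
    _ = opANorm A T * opANorm A S * anorm A x := by ring

theorem opANorm_pow_le (hT : MemBA A T) (n : ℕ) : opANorm A (T ^ n) ≤ opANorm A T ^ n := by
  induction n with
  | zero => exact opANorm_le zero_le_one fun x => by simp
  | succ n ih =>
    rw [pow_succ, pow_succ]
    exact (opANorm_mul_le (hT.pow n) hT).trans (by gcongr; exact opANorm_nonneg)

theorem MemBA.apply_eq_zero_of_apply_eq_zero (hA : A.IsPositive) (hT : MemBA A T) {w : E}
    (hw : A w = 0) : A (T w) = 0 := by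
  refine apply_eq_zero_of_anorm_eq_zero hA (le_antisymm ?_ (anorm_nonneg _))
  simpa [anorm_eq_zero_of_apply_eq_zero hw] using hT.anorm_apply_le w

theorem MemBA.mul_mul_eq_of_mul_eq (hA : A.IsPositive) {R M N : E →L[ℂ] E} (hR : MemBA A R)
    (h : A * M = A * N) : A * R * M = A * R * N := by
  ext x
  have hMN : A (M x - N x) = 0 := by
    simpa [sub_eq_zero] using DFunLike.congr_fun h x
  simpa [sub_eq_zero] using hR.apply_eq_zero_of_apply_eq_zero hA hMN

theorem mul_pow_mul_pow_eq_of_mul_mul_eq (hA : A.IsPositive) (hT : MemBA A T)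
    (hTS : A * (T * S) = A) (n : ℕ) : A * T ^ n * S ^ n = A := by
  induction n with
  | zero => simp
  | succ n ih =>
    have hstep : A * (T * S * S ^ n) = A * S ^ n := by rw [← mul_assoc, hTS]
    calc A * T ^ (n + 1) * S ^ (n + 1) = A * T ^ n * (T * S * S ^ n) := by
          rw [pow_succ, pow_succ']
          simp only [mul_assoc]
      _ = A * T ^ n * S ^ n := (hT.pow n).mul_mul_eq_of_mul_eq hA hstep
      _ = A := ih

theorem one_le_opANorm_mul_opANorm (hA : A.IsPositive) (hA0 : A ≠ 0) (hT : MemBA A T)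
    (hS : MemBA A S) (hTS : A * T * S = A) : 1 ≤ opANorm A T * opANorm A S := by
  obtain ⟨x, hx⟩ := exists_anorm_pos hA hA0
  refine le_of_mul_le_mul_right ?_ (pow_pos hx 2)
  calc 1 * anorm A x ^ 2 = RCLike.re (inner ℂ (A (T (S x))) x) := by
        rw [one_mul, anorm_sq hA]
        exact congrArg (fun y => RCLike.re (inner ℂ y x)) (DFunLike.congr_fun hTS x).symm
    _ ≤ ‖inner ℂ (A (T (S x))) x‖ := RCLike.re_le_norm _
    _ ≤ anorm A (T (S x)) * anorm A x := norm_inner_apply_le_anorm_mul_anorm hA _ _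
    _ ≤ opANorm A T * (opANorm A S * anorm A x) * anorm A x := by
        gcongr
        exact (hT.anorm_apply_le _).trans (by gcongr; exacts [opANorm_nonneg, hS.anorm_apply_le x])
    _ = opANorm A T * opANorm A S * anorm A x ^ 2 := by ring

end ASeminorm

theorem one_le_rpow_inv_mul_rpow_inv {a b : ℝ} {n m : ℕ} (ha : 0 ≤ a) (hb : 0 ≤ b)
    (hn : n ≠ 0) (hm : m ≠ 0) (h : 1 ≤ a ^ m * b ^ n) :
    1 ≤ a ^ (n⁻¹ : ℝ) * b ^ (m⁻¹ : ℝ) := by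
  have hab : 0 ≤ a ^ (n⁻¹ : ℝ) * b ^ (m⁻¹ : ℝ) := by positivity
  refine (one_le_pow_iff_of_nonneg hab (mul_ne_zero hn hm)).1 ?_
  rwa [mul_pow, pow_mul, mul_comm n m, pow_mul, Real.rpow_inv_natCast_pow ha hn,
    Real.rpow_inv_natCast_pow hb hm]

theorem one_le_ciInf_mul_ciInf {ι κ : Type*} [Nonempty ι] [Nonempty κ] {f : ι → ℝ} {g : κ → ℝ}
    (hf : ∀ i, 0 ≤ f i) (hg : ∀ j, 0 ≤ g j) (h : ∀ i j, 1 ≤ f i * g j) :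
    1 ≤ (⨅ i, f i) * ⨅ j, g j := by
  rw [Real.iInf_mul_of_nonneg (Real.iInf_nonneg hg)]
  refine le_ciInf fun i => ?_
  rw [Real.mul_iInf_of_nonneg (hf i)]
  exact le_ciInf (h i)

theorem stmt16_general (A T S : H →L[ℂ] H) (hA : A.IsPositive) (hA0 : A ≠ 0)
    (hT : MemBA A T) (hSmem : MemBA A S)
    (hTS : A.comp (T.comp S) = A) :
    1 ≤ rA A T * rA A S := by
  refine one_le_ciInf_mul_ciInf (fun _ => Real.rpow_nonneg opANorm_nonneg _)
    (fun _ => Real.rpow_nonneg opANorm_nonneg _) fun n m => ?_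
  refine one_le_rpow_inv_mul_rpow_inv opANorm_nonneg opANorm_nonneg n.ne_zero m.ne_zero ?_
  calc 1 ≤ opANorm A (T ^ ((n : ℕ) * m)) * opANorm A (S ^ ((n : ℕ) * m)) :=
        one_le_opANorm_mul_opANorm hA hA0 (hT.pow _) (hSmem.pow _)
          (mul_pow_mul_pow_eq_of_mul_mul_eq hA hT hTS _)
    _ ≤ opANorm A (T ^ (n : ℕ)) ^ (m : ℕ) * opANorm A (S ^ (m : ℕ)) ^ (n : ℕ) := by
        rw [pow_mul, mul_comm (n : ℕ), pow_mul]
        exact mul_le_mul (opANorm_pow_le (hT.pow n) m) (opANorm_pow_le (hSmem.pow m) n)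
          opANorm_nonneg (pow_nonneg opANorm_nonneg _)

theorem stmt16 (A T S : H →L[ℂ] H) (hA : A.IsPositive) (hA0 : A ≠ 0)
    (hT : MemBA A T) (hT0 : T ≠ 0) (hSmem : MemBA A S) (hS0 : S ≠ 0)
    (hTS : A.comp (T.comp S) = A) (hST : A.comp (S.comp T) = A) :
    1 ≤ rA A T * rA A S :=
  stmt16_general A T S hA hA0 hT hSmem hTS
end
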